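/- arXiv:1511.02823 — 7 statements merged into one kernel-verified Lean document; each statement's English description precedes it below -/
import Mathlib

section
/- Consider a measurement system: a finite set I of properties, for each i ∈ I a finite nonempty value set E_i, a finite family of contexts C_1,…,C_n ⊆ I, and for each context j a probability distribution p_j on ∏_{i∈C_j} E_i. If the system is no-signaling (for any two contexts j, j', the marginals of p_j and p_{j'} on ∏_{i∈C_j ∩ C_{j'}} E_i coincide), then there exists a signed joint: a signed probability distribution q on ∏_{i∈I} E_i (allowed to take negative values, with total sum 1) whose marginal on ∏_{i∈C_j} E_i equals p_j for every context j. -/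
open Finset

noncomputable section

/-- Marginal of a (signed) distribution on coordinates `S` to a subset `T ⊆ S`. -/
def margin {I : Type*} [DecidableEq I] (E : I → Type*)
    [∀ i, Fintype (E i)] [∀ i, DecidableEq (E i)]
    {S T : Finset I} (hTS : T ⊆ S) (p : (∀ i : S, E i) → ℝ) :
    (∀ i : T, E i) → ℝ :=
  fun f => ∑ g : (∀ i : S, E i),
    if ∀ i : T, g ⟨i.1, hTS i.2⟩ = f i then p g else 0

/-- Marginal of a (signed) distribution on all coordinates to the coordinates in `T`. -/
def marginFull {I : Type*} [Fintype I] [DecidableEq I] (E : I → Type*)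
    [∀ i, Fintype (E i)] [∀ i, DecidableEq (E i)]
    (q : (∀ i, E i) → ℝ) (T : Finset I) : (∀ i : T, E i) → ℝ :=
  fun f => ∑ g : (∀ i, E i), if ∀ i : T, g i.1 = f i then q g else 0

/-- Single-coordinate marginal of a (signed) distribution on coordinates `S`. -/
def margin1 {I : Type*} [DecidableEq I] (E : I → Type*)
    [∀ i, Fintype (E i)] [∀ i, DecidableEq (E i)]
    {S : Finset I} (p : (∀ i : S, E i) → ℝ) (i : I) (h : i ∈ S) : E i → ℝ :=
  fun x => ∑ g : (∀ k : S, E k), if g ⟨i, h⟩ = x then p g else 0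

section Aux

set_option linter.unusedSectionVars false

variable {I : Type*} [Fintype I] [DecidableEq I] (E : I → Type*)
  [∀ i, Fintype (E i)] [∀ i, DecidableEq (E i)] [∀ i, Nonempty (E i)]

/-- Total mass is preserved by taking marginals. -/
lemma marginFull_sum (q : (∀ i, E i) → ℝ) (T : Finset I) :
    ∑ f, marginFull E q T f = ∑ g, q g := by
  unfold marginFull
  rw [Finset.sum_comm]
  refine Finset.sum_congr rfl fun g _ => ?_
  have : ∀ f : (∀ i : T, E i), (∀ i : T, g i.1 = f i) ↔ f = (fun i : T => g i.1) := by
    intro f; constructor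
    · intro hg; funext i; exact (hg i).symm
    · intro hg; subst hg; intro i; rfl
  simp only [this]
  simp

/-- Marginals compose: marginalizing to `S` and then to `T ⊆ S` is
marginalizing to `T`. -/
lemma marginFull_chain (q : (∀ i, E i) → ℝ) {S T : Finset I} (hTS : T ⊆ S) :
    margin E hTS (marginFull E q S) = marginFull E q T := by
  funext f
  unfold margin marginFull
  have step1 : (∑ h : (∀ i : S, E i),
      if ∀ i : T, h ⟨i.1, hTS i.2⟩ = f i then
        (∑ g : (∀ i, E i), if ∀ i : S, g i.1 = h i then q g else 0) else 0)
      = ∑ h : (∀ i : S, E i), ∑ g : (∀ i, E i),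
        if (fun i : S => g i.1) = h ∧ (∀ i : T, h ⟨i.1, hTS i.2⟩ = f i) then q g else 0 := by
    refine Finset.sum_congr rfl fun h _ => ?_
    split_ifs with hP
    · refine Finset.sum_congr rfl fun g _ => ?_
      have : (∀ i : S, g i.1 = h i) ↔ ((fun i : S => g i.1) = h ∧ (∀ i : T, h ⟨i.1, hTS i.2⟩ = f i)) := by
        constructor
        · intro hg; exact ⟨funext hg, hP⟩
        · intro hg i; exact congrFun hg.1 i
      simp only [this]
    · refine (Finset.sum_eq_zero fun g _ => ?_).symm
      simp only [hP, and_false, if_false]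
  rw [step1, Finset.sum_comm]
  refine Finset.sum_congr rfl fun g _ => ?_
  simp only [ite_and]
  rw [Finset.sum_ite_eq Finset.univ (fun i : S => g i.1)
      (fun h => if (∀ i : T, h ⟨i.1, hTS i.2⟩ = f i) then q g else 0)]
  simp only [Finset.mem_univ, if_true]

lemma marginFull_add (q r : (∀ i, E i) → ℝ) (T : Finset I) :
    marginFull E (fun g => q g + r g) T
      = fun f => marginFull E q T f + marginFull E r T f := by
  funext f
  unfold marginFull
  rw [← Finset.sum_add_distrib]
  exact Finset.sum_congr rfl fun g _ => by split_ifs <;> simp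

lemma margin_sub {S T : Finset I} (hTS : T ⊆ S) (x y : (∀ i : S, E i) → ℝ) :
    margin E hTS (fun f => x f - y f)
      = fun f' => margin E hTS x f' - margin E hTS y f' := by
  funext f'
  unfold margin
  rw [← Finset.sum_sub_distrib]
  exact Finset.sum_congr rfl fun g _ => by split_ifs <;> simp

/-- Extension of a distribution on coordinates `S` to all coordinates, as a
product with the uniform distribution on the remaining coordinates. -/
def extDist (S : Finset I) (d : (∀ i : S, E i) → ℝ) : (∀ i, E i) → ℝ :=
  fun g => (Fintype.card (∀ i : {x : I // ¬ x ∈ S}, E i.1) : ℝ)⁻¹ * d (fun i => g i.1)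

lemma extDist_margin_self (S : Finset I) (d : (∀ i : S, E i) → ℝ) :
    marginFull E (extDist E S d) S = d := by
  funext f
  unfold marginFull extDist
  set e := Equiv.piEquivPiSubtypeProd (fun x : I => x ∈ S) E with he
  rw [← Fintype.sum_equiv e.symm
      (fun y => if (∀ i : S, e.symm y i.1 = f i) then
        (Fintype.card (∀ i : {x : I // ¬ x ∈ S}, E i.1) : ℝ)⁻¹ * d (fun i => e.symm y i.1) else 0)
      (fun g => if (∀ i : S, g i.1 = f i) then
        (Fintype.card (∀ i : {x : I // ¬ x ∈ S}, E i.1) : ℝ)⁻¹ * d (fun i => g i.1) else 0)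
      (fun y => rfl)]
  rw [Fintype.sum_prod_type]
  have hrestr : ∀ (a : ∀ i : S, E i) (b : ∀ i : {x : I // ¬ x ∈ S}, E i.1),
      (fun i : S => e.symm (a, b) i.1) = a := by
    intro a b; funext i
    simp [he, Equiv.piEquivPiSubtypeProd_symm_apply, dif_pos i.2]
  have hcond : ∀ (a : ∀ i : S, E i) (b : ∀ i : {x : I // ¬ x ∈ S}, E i.1),
      (∀ i : S, e.symm (a, b) i.1 = f i) ↔ a = f := by
    intro a b
    constructor
    · intro h; funext i; rw [← h i]; exact (congrFun (hrestr a b) i).symm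
    · intro h; intro i; rw [congrFun (hrestr a b) i, h]
  have : ∀ (a : ∀ i : S, E i), (∑ b : (∀ i : {x : I // ¬ x ∈ S}, E i.1),
      if (∀ i : S, e.symm (a, b) i.1 = f i) then
        (Fintype.card (∀ i : {x : I // ¬ x ∈ S}, E i.1) : ℝ)⁻¹ * d (fun i => e.symm (a, b) i.1) else 0)
      = if a = f then d a else 0 := by
    intro a
    by_cases h : a = f
    · simp only [h, if_true]
      subst h
      have : ∀ b, (if (∀ i : S, e.symm (a, b) i.1 = a i) then
          (Fintype.card (∀ i : {x : I // ¬ x ∈ S}, E i.1) : ℝ)⁻¹ * d (fun i => e.symm (a, b) i.1) else 0)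
          = (Fintype.card (∀ i : {x : I // ¬ x ∈ S}, E i.1) : ℝ)⁻¹ * d a := by
        intro b
        rw [if_pos ((hcond a b).mpr rfl), hrestr a b]
      rw [Finset.sum_congr rfl (fun b _ => this b), Finset.sum_const]
      simp only [Finset.card_univ, nsmul_eq_mul]
      rw [← mul_assoc, mul_inv_cancel₀, one_mul]
      exact_mod_cast Fintype.card_ne_zero
    · simp only [h, if_false]
      refine Finset.sum_eq_zero fun b _ => ?_
      rw [if_neg]
      intro hc; exact h ((hcond a b).mp hc)
  rw [Finset.sum_congr rfl (fun a _ => this a)]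
  simp

lemma extDist_margin_zero (S T : Finset I) (d : (∀ i : S, E i) → ℝ)
    (hz : margin E (inter_subset_right : T ∩ S ⊆ S) d = 0) :
    marginFull E (extDist E S d) T = 0 := by
  funext f
  unfold marginFull extDist
  set c := (Fintype.card (∀ i : {x : I // ¬ x ∈ S}, E i.1) : ℝ)⁻¹ with hc
  set e := Equiv.piEquivPiSubtypeProd (fun x : I => x ∈ S) E with he
  rw [← Fintype.sum_equiv e.symm
      (fun y => if (∀ i : T, e.symm y i.1 = f i) then c * d (fun i => e.symm y i.1) else 0)
      (fun g => if (∀ i : T, g i.1 = f i) then c * d (fun i => g i.1) else 0)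
      (fun y => rfl)]
  rw [Fintype.sum_prod_type]
  have hrestr : ∀ (a : ∀ i : S, E i) (b : ∀ i : {x : I // ¬ x ∈ S}, E i.1),
      (fun i : S => e.symm (a, b) i.1) = a := by
    intro a b; funext i
    simp [he, Equiv.piEquivPiSubtypeProd_symm_apply, dif_pos i.2]
  set A : (∀ i : S, E i) → Prop := fun a =>
    ∀ i : (T ∩ S : Finset I), a ⟨i.1, (Finset.mem_inter.mp i.2).2⟩ = f ⟨i.1, (Finset.mem_inter.mp i.2).1⟩ with hA
  set B : (∀ i : {x : I // ¬ x ∈ S}, E i.1) → Prop := fun b =>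
    ∀ i : T, ∀ h : ¬ i.1 ∈ S, b ⟨i.1, h⟩ = f i with hB
  have hcond : ∀ a b, (∀ i : T, e.symm (a, b) i.1 = f i) ↔ (A a ∧ B b) := by
    intro a b
    have happ : ∀ (i : I), e.symm (a, b) i = if h : i ∈ S then a ⟨i, h⟩ else b ⟨i, h⟩ := by
      intro i; simp [he, Equiv.piEquivPiSubtypeProd_symm_apply]
    constructor
    · intro h
      refine ⟨fun i => ?_, fun i hi => ?_⟩
      · have := h ⟨i.1, (Finset.mem_inter.mp i.2).1⟩
        rwa [happ, dif_pos (Finset.mem_inter.mp i.2).2] at this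
      · have := h i
        rwa [happ, dif_neg hi] at this
    · rintro ⟨ha, hb⟩ i
      rw [happ]
      by_cases hi : i.1 ∈ S
      · rw [dif_pos hi]
        exact ha ⟨i.1, Finset.mem_inter.mpr ⟨i.2, hi⟩⟩
      · rw [dif_neg hi]
        exact hb i hi
  have inner : ∀ a, (if A a then d a else 0)
      = (if ∀ i : (T ∩ S : Finset I), a ⟨i.1, (inter_subset_right : T ∩ S ⊆ S) i.2⟩
          = f ⟨i.1, (Finset.mem_inter.mp i.2).1⟩ then d a else 0) := fun a => rfl
  calc (∑ a : (∀ i : S, E i), ∑ b : (∀ i : {x : I // ¬ x ∈ S}, E i.1),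
        if (∀ i : T, e.symm (a, b) i.1 = f i) then c * d (fun i => e.symm (a, b) i.1) else 0)
      = ∑ a : (∀ i : S, E i), ∑ b : (∀ i : {x : I // ¬ x ∈ S}, E i.1),
        if B b then (if A a then c * d a else 0) else 0 := by
        refine Finset.sum_congr rfl fun a _ => Finset.sum_congr rfl fun b _ => ?_
        rw [hrestr a b]
        by_cases h : (∀ i : T, e.symm (a, b) i.1 = f i)
        · obtain ⟨ha, hb⟩ := (hcond a b).mp h
          rw [if_pos h, if_pos hb, if_pos ha]
        · rw [if_neg h]
          by_cases hb : B b
          · by_cases ha : A a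
            · exact absurd ((hcond a b).mpr ⟨ha, hb⟩) h
            · rw [if_pos hb, if_neg ha]
          · rw [if_neg hb]
    _ = ∑ b : (∀ i : {x : I // ¬ x ∈ S}, E i.1), ∑ a : (∀ i : S, E i),
        if B b then (if A a then c * d a else 0) else 0 := Finset.sum_comm
    _ = 0 := by
        refine Finset.sum_eq_zero fun b _ => ?_
        by_cases hb : B b
        · rw [Finset.sum_congr rfl fun (a : (∀ i : S, E i)) _ =>
              (if_pos hb : (if B b then (if A a then c * d a else 0) else 0) = _)]
          have : (∑ a : (∀ i : S, E i), if A a then c * d a else 0)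
              = c * margin E (inter_subset_right : T ∩ S ⊆ S) d
                  (fun i => f ⟨i.1, (Finset.mem_inter.mp i.2).1⟩) := by
            unfold margin
            rw [Finset.mul_sum]
            refine Finset.sum_congr rfl fun a _ => ?_
            rw [show (if A a then c * d a else 0) = c * (if A a then d a else 0) by
              split_ifs <;> simp, inner a]
          rw [this, hz]
          rw [Pi.zero_apply, mul_zero]
        · exact Finset.sum_eq_zero fun a _ => if_neg hb

/-- The inductive construction of a signed joint. -/
lemma signed_joint_aux : ∀ (n : ℕ) (C : Fin n → Finset I)
    (p : ∀ j : Fin n, (∀ i : (C j : Finset I), E i) → ℝ),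
    (∀ j, ∑ f, p j f = 1) →
    (∀ j j' : Fin n,
        margin E (inter_subset_left : C j ∩ C j' ⊆ C j) (p j)
          = margin E (inter_subset_right : C j ∩ C j' ⊆ C j') (p j')) →
    ∃ q : (∀ i, E i) → ℝ, ∑ g, q g = 1 ∧ ∀ j, marginFull E q (C j) = p j := by
  intro n
  induction n with
  | zero =>
    intro C p hp1 hns
    refine ⟨fun g => if g = Classical.arbitrary _ then 1 else 0, ?_, fun j => j.elim0⟩
    simp
  | succ n ih =>
    intro C p hp1 hns
    obtain ⟨q, hq1, hqm⟩ := ih (fun j => C j.castSucc) (fun j => p j.castSucc)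
      (fun j => hp1 _) (fun j j' => hns _ _)
    set S := C (Fin.last n) with hS
    set d : (∀ i : S, E i) → ℝ := fun f => p (Fin.last n) f - marginFull E q S f with hd
    refine ⟨fun g => q g + extDist E S d g, ?_, ?_⟩
    · rw [Finset.sum_add_distrib, hq1]
      have h1 : ∑ g, extDist E S d g = 0 := by
        rw [← marginFull_sum E (extDist E S d) S, extDist_margin_self]
        rw [hd]
        rw [Finset.sum_sub_distrib, hp1, marginFull_sum, hq1, sub_self]
      rw [h1]
      norm_num
    · intro j
      induction j using Fin.lastCases with
      | last =>
        rw [marginFull_add, extDist_margin_self]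
        funext f
        rw [hd]
        ring
      | cast j0 =>
        have hzero : marginFull E (extDist E S d) (C j0.castSucc) = 0 := by
          apply extDist_margin_zero
          rw [hd, margin_sub]
          have h2 : margin E (inter_subset_right : C j0.castSucc ∩ S ⊆ S) (marginFull E q S)
              = margin E (inter_subset_right : C j0.castSucc ∩ S ⊆ S) (p (Fin.last n)) := by
            rw [marginFull_chain E q (inter_subset_right : C j0.castSucc ∩ S ⊆ S)]
            rw [← marginFull_chain E q (inter_subset_left : C j0.castSucc ∩ S ⊆ C j0.castSucc)]
            rw [hqm j0]
            exact hns j0.castSucc (Fin.last n)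
          rw [h2]
          funext f'
          simp
        rw [marginFull_add, hzero]
        funext f
        rw [Pi.zero_apply, add_zero]
        exact congrFun (hqm j0) f

end Aux

/-- If a measurement system is no-signaling (the marginals of any two contexts
agree on their common coordinates), then it admits a signed joint: a signed
probability distribution on the full product whose marginal on each context
reproduces that context's distribution. -/
theorem no_signaling_implies_signed_joint
    {I : Type*} [Fintype I] [DecidableEq I]
    (E : I → Type*) [∀ i, Fintype (E i)] [∀ i, DecidableEq (E i)]
    [∀ i, Nonempty (E i)]
    {n : ℕ} (C : Fin n → Finset I)
    (p : ∀ j : Fin n, (∀ i : (C j : Finset I), E i) → ℝ)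
    (hp0 : ∀ j f, 0 ≤ p j f) (hp1 : ∀ j, ∑ f, p j f = 1)
    (hns : ∀ j j' : Fin n,
        margin E (inter_subset_left : C j ∩ C j' ⊆ C j) (p j)
          = margin E (inter_subset_right : C j ∩ C j' ⊆ C j') (p j')) :
    ∃ q : (∀ i, E i) → ℝ, ∑ g, q g = 1 ∧ ∀ j, marginFull E q (C j) = p j := by
  exact signed_joint_aux E n C p hp1 hns
end
end

section
/- Consider a measurement system: a finite set I of properties, finite nonempty value sets E_i, contexts C_1,…,C_n ⊆ I, and probability distributions p_j on ∏_{i∈C_j} E_i. There exists a signed joint q with L1 norm ∑_ω |q(ω)| equal to 1 if and only if there exists a proper (nonnegative) joint probability distribution on ∏_{i∈I} E_i whose marginal on each context C_j equals p_j. Consequently, if the minimum L1 probability norm M* over all signed joints exists, the system is non-contextual if and only if M* = 1. -/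
open Finset

noncomputable section

/-- A signed joint for a measurement system: a real-valued function on the full
product summing to 1 whose marginal on each context equals that context's
distribution. -/
def IsSignedJoint {I : Type*} [Fintype I] [DecidableEq I]
    (E : I → Type*) [∀ i, Fintype (E i)] [∀ i, DecidableEq (E i)]
    {n : ℕ} (C : Fin n → Finset I)
    (p : ∀ j : Fin n, (∀ i : (C j : Finset I), E i) → ℝ)
    (q : (∀ i, E i) → ℝ) : Prop :=
  (∑ g, q g = 1) ∧ ∀ j, marginFull E q (C j) = p j

/-- A measurement system admits a signed joint of L1 norm 1 iff it admits a
proper (nonnegative) joint; consequently, if the minimum L1 probability norm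
`M*` over all signed joints exists, the system is non-contextual iff `M* = 1`. -/
theorem l1_norm_one_iff_proper_joint
    {I : Type*} [Fintype I] [DecidableEq I]
    (E : I → Type*) [∀ i, Fintype (E i)] [∀ i, DecidableEq (E i)]
    [∀ i, Nonempty (E i)]
    {n : ℕ} (C : Fin n → Finset I)
    (p : ∀ j : Fin n, (∀ i : (C j : Finset I), E i) → ℝ)
    (hp0 : ∀ j f, 0 ≤ p j f) (hp1 : ∀ j, ∑ f, p j f = 1) :
    ((∃ q : (∀ i, E i) → ℝ, IsSignedJoint E C p q ∧ ∑ g, |q g| = 1) ↔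
      (∃ q : (∀ i, E i) → ℝ, (∀ g, 0 ≤ q g) ∧ IsSignedJoint E C p q)) ∧
    (∀ M : ℝ,
      IsLeast {m : ℝ | ∃ q : (∀ i, E i) → ℝ, IsSignedJoint E C p q ∧ ∑ g, |q g| = m} M →
        ((∃ q : (∀ i, E i) → ℝ, (∀ g, 0 ≤ q g) ∧ IsSignedJoint E C p q) ↔ M = 1)) := by
  have key : (∃ q : (∀ i, E i) → ℝ, IsSignedJoint E C p q ∧ ∑ g, |q g| = 1) ↔
      (∃ q : (∀ i, E i) → ℝ, (∀ g, 0 ≤ q g) ∧ IsSignedJoint E C p q) := by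
    constructor
    · rintro ⟨q, hq, h1⟩
      refine ⟨q, ?_, hq⟩
      have hz : ∑ g, (|q g| - q g) = 0 := by
        rw [Finset.sum_sub_distrib, h1, hq.1]; ring
      have hnn : ∀ g ∈ Finset.univ, 0 ≤ |q g| - q g := fun g _ => by
        have := neg_abs_le (q g); linarith [le_abs_self (q g)]
      intro g
      have := (Finset.sum_eq_zero_iff_of_nonneg hnn).1 hz g (Finset.mem_univ g)
      have h2 := abs_nonneg (q g)
      nlinarith [abs_nonneg (q g)]
    · rintro ⟨q, hq0, hq⟩
      refine ⟨q, hq, ?_⟩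
      rw [← hq.1]
      exact Finset.sum_congr rfl fun g _ => abs_of_nonneg (hq0 g)
  refine ⟨key, fun M hM => ?_⟩
  have hge : (1 : ℝ) ≤ M := by
    obtain ⟨q, hq, hqM⟩ := hM.1
    calc (1:ℝ) = |∑ g, q g| := by rw [hq.1]; simp
    _ ≤ ∑ g, |q g| := Finset.abs_sum_le_sum_abs _ _
    _ = M := hqM
  constructor
  · intro h
    obtain ⟨q, hq, h1⟩ := key.2 h
    have := hM.2 ⟨q, hq, h1⟩
    linarith
  · intro h
    exact key.1 (h ▸ hM.1)
end
end

section
/- Let A, B, C be random variables on a common probability space, each taking only the values −1 and +1. Then −1 ≤ E(AB) + E(BC) + E(AC). -/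
/-!
For `a, b, c ∈ {-1, 1}` one has `2 (ab + bc + ac) = (a + b + c)² - 3 ≥ -2`, since `a + b + c` is odd;
integrating this pointwise bound against a probability measure gives the inequality.
-/

open MeasureTheory

theorem neg_one_le_mul_add_mul_add_mul {a b c : ℝ} (ha : a = -1 ∨ a = 1) (hb : b = -1 ∨ b = 1)
    (hc : c = -1 ∨ c = 1) : -1 ≤ a * b + b * c + a * c := by
  rcases ha with rfl | rfl <;> rcases hb with rfl | rfl <;> rcases hc with rfl | rfl <;> norm_num

theorem norm_le_one_of_eq_neg_one_or_eq_one {a : ℝ} (ha : a = -1 ∨ a = 1) : ‖a‖ ≤ 1 := by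
  rcases ha with rfl | rfl <;> norm_num

theorem MeasureTheory.integrable_mul_of_norm_le {Ω : Type*} [MeasurableSpace Ω] {P : Measure Ω}
    [IsFiniteMeasure P] {f g : Ω → ℝ} {M N : ℝ} (hf : Measurable f) (hg : Measurable g)
    (hfM : ∀ ω, ‖f ω‖ ≤ M) (hgN : ∀ ω, ‖g ω‖ ≤ N) : Integrable (fun ω ↦ f ω * g ω) P :=
  (Integrable.of_bound hf.aestronglyMeasurable M (ae_of_all _ hfM)).mul_bdd
    hg.aestronglyMeasurable (ae_of_all _ hgN)

/-- Lower Suppes–Zanotti inequality: for ±1-valued random variables `A`, `B`,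
`C` on a common probability space, `-1 ≤ E(AB) + E(BC) + E(AC)`. -/
theorem suppes_zanotti_lower
    {Ω : Type*} [MeasurableSpace Ω] (P : Measure Ω) [IsProbabilityMeasure P]
    (A B C : Ω → ℝ) (hA : Measurable A) (hB : Measurable B) (hC : Measurable C)
    (hAv : ∀ ω, A ω = -1 ∨ A ω = 1) (hBv : ∀ ω, B ω = -1 ∨ B ω = 1)
    (hCv : ∀ ω, C ω = -1 ∨ C ω = 1) :
    -1 ≤ (∫ ω, A ω * B ω ∂P) + (∫ ω, B ω * C ω ∂P) + (∫ ω, A ω * C ω ∂P) := by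
  have hA1 ω := norm_le_one_of_eq_neg_one_or_eq_one (hAv ω)
  have hB1 ω := norm_le_one_of_eq_neg_one_or_eq_one (hBv ω)
  have hC1 ω := norm_le_one_of_eq_neg_one_or_eq_one (hCv ω)
  have hAB : Integrable (fun ω ↦ A ω * B ω) P := integrable_mul_of_norm_le hA hB hA1 hB1
  have hBC : Integrable (fun ω ↦ B ω * C ω) P := integrable_mul_of_norm_le hB hC hB1 hC1
  have hAC : Integrable (fun ω ↦ A ω * C ω) P := integrable_mul_of_norm_le hA hC hA1 hC1
  calc (-1 : ℝ) = ∫ _, (-1 : ℝ) ∂P := by simp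
    _ ≤ ∫ ω, (A ω * B ω + B ω * C ω + A ω * C ω) ∂P :=
        integral_mono (integrable_const _) ((hAB.add hBC).add hAC)
          fun ω ↦ neg_one_le_mul_add_mul_add_mul (hAv ω) (hBv ω) (hCv ω)
    _ = _ := by
        rw [integral_add (f := fun ω ↦ A ω * B ω + B ω * C ω) (hAB.add hBC) hAC,
          integral_add hAB hBC]
end

section
/- Let A, B, C be random variables on a common probability space, each taking only the values −1 and +1. Then E(AB) + E(BC) + E(AC) ≤ 1 + 2·min{E(AB), E(BC), E(AC)}. -/
open MeasureTheory

lemma sz_integrable {Ω : Type*} [MeasurableSpace Ω] (P : Measure Ω)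
    [IsProbabilityMeasure P] (f g : Ω → ℝ) (hf : Measurable f) (hg : Measurable g)
    (hfv : ∀ ω, f ω = -1 ∨ f ω = 1) (hgv : ∀ ω, g ω = -1 ∨ g ω = 1) :
    Integrable (fun ω => f ω * g ω) P := by
  refine (integrable_const (1 : ℝ)).mono' ((hf.mul hg).aestronglyMeasurable) ?_
  filter_upwards with ω
  rcases hfv ω with h1 | h1 <;> rcases hgv ω with h2 | h2 <;> simp [h1, h2]

lemma sz_key {Ω : Type*} [MeasurableSpace Ω] (P : Measure Ω)
    [IsProbabilityMeasure P] (f g h : Ω → ℝ) (hf : Measurable f) (hg : Measurable g)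
    (hh : Measurable h)
    (hfv : ∀ ω, f ω = -1 ∨ f ω = 1) (hgv : ∀ ω, g ω = -1 ∨ g ω = 1)
    (hhv : ∀ ω, h ω = -1 ∨ h ω = 1) :
    (∫ ω, f ω * g ω ∂P) + (∫ ω, g ω * h ω ∂P) - (∫ ω, f ω * h ω ∂P) ≤ 1 := by
  have hfg := sz_integrable P f g hf hg hfv hgv
  have hgh := sz_integrable P g h hg hh hgv hhv
  have hfh := sz_integrable P f h hf hh hfv hhv
  have : (∫ ω, f ω * g ω ∂P) + (∫ ω, g ω * h ω ∂P) - (∫ ω, f ω * h ω ∂P)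
      = ∫ ω, (f ω * g ω + g ω * h ω - f ω * h ω) ∂P := by
    have hsum : Integrable (fun ω => f ω * g ω + g ω * h ω) P := hfg.add hgh
    rw [integral_sub hsum hfh, integral_add hfg hgh]
  rw [this]
  calc ∫ ω, (f ω * g ω + g ω * h ω - f ω * h ω) ∂P
      ≤ ∫ _ω, (1 : ℝ) ∂P := by
        apply integral_mono ((hfg.add hgh).sub hfh) (integrable_const 1)
        intro ω
        rcases hfv ω with h1 | h1 <;> rcases hgv ω with h2 | h2 <;>
          rcases hhv ω with h3 | h3 <;> simp [h1, h2, h3] <;> norm_num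
    _ = 1 := by simp

/-- Upper Suppes–Zanotti inequality: for ±1-valued random variables `A`, `B`,
`C` on a common probability space,
`E(AB) + E(BC) + E(AC) ≤ 1 + 2·min{E(AB), E(BC), E(AC)}`. -/
theorem suppes_zanotti_upper
    {Ω : Type*} [MeasurableSpace Ω] (P : Measure Ω) [IsProbabilityMeasure P]
    (A B C : Ω → ℝ) (hA : Measurable A) (hB : Measurable B) (hC : Measurable C)
    (hAv : ∀ ω, A ω = -1 ∨ A ω = 1) (hBv : ∀ ω, B ω = -1 ∨ B ω = 1)
    (hCv : ∀ ω, C ω = -1 ∨ C ω = 1) :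
    (∫ ω, A ω * B ω ∂P) + (∫ ω, B ω * C ω ∂P) + (∫ ω, A ω * C ω ∂P)
      ≤ 1 + 2 * min (∫ ω, A ω * B ω ∂P)
          (min (∫ ω, B ω * C ω ∂P) (∫ ω, A ω * C ω ∂P)) := by
  have h1 := sz_key P A B C hA hB hC hAv hBv hCv
  have h2 : (∫ ω, B ω * C ω ∂P) + (∫ ω, A ω * C ω ∂P) - (∫ ω, A ω * B ω ∂P) ≤ 1 := by
    have := sz_key P A C B hA hC hB hAv hCv hBv
    have e : ∀ ω, C ω * B ω = B ω * C ω := fun ω => mul_comm _ _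
    simp only [e] at this
    linarith
  have h3 : (∫ ω, A ω * B ω ∂P) + (∫ ω, A ω * C ω ∂P) - (∫ ω, B ω * C ω ∂P) ≤ 1 := by
    have := sz_key P B A C hB hA hC hBv hAv hCv
    have e : ∀ ω, B ω * A ω = A ω * B ω := fun ω => mul_comm _ _
    simp only [e] at this
    linarith
  rcases le_total (∫ ω, A ω * B ω ∂P) (min (∫ ω, B ω * C ω ∂P) (∫ ω, A ω * C ω ∂P)) with hm | hm
  · rw [min_eq_left hm]; linarith
  · rw [min_eq_right hm]
    rcases le_total (∫ ω, B ω * C ω ∂P) (∫ ω, A ω * C ω ∂P) with hm2 | hm2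
    · rw [min_eq_left hm2]; linarith
    · rw [min_eq_right hm2]; linarith
end

section
/- Let ε₁, ε₂, ε₃ ∈ [−1, 1] satisfy the Suppes–Zanotti inequalities −1 ≤ ε₁ + ε₂ + ε₃ ≤ 1 + 2·min{ε₁, ε₂, ε₃}. Then there exists a (proper, nonnegative) probability distribution on {−1,1}³ such that, denoting by A, B, C the three coordinate random variables, E(A) = E(B) = E(C) = 0, E(AB) = ε₁, E(BC) = ε₂, and E(AC) = ε₃. -/
open Finset

noncomputable section

/-- The two-element set `{−1, 1} ⊆ ℝ`. -/
def pmOne : Finset ℝ := {-1, 1}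

/-- Signed expectation of `f` with respect to a signed distribution `p` on
`{−1,1}³`, both encoded as functions of the three real coordinates. -/
def Ep (p f : ℝ → ℝ → ℝ → ℝ) : ℝ :=
  ∑ x ∈ pmOne, ∑ y ∈ pmOne, ∑ z ∈ pmOne, f x y z * p x y z

/-- Sufficiency of the Suppes–Zanotti inequalities: if `ε₁, ε₂, ε₃ ∈ [−1,1]`
satisfy `−1 ≤ ε₁ + ε₂ + ε₃ ≤ 1 + 2·min{ε₁, ε₂, ε₃}`, then there is a proper
probability distribution on `{−1,1}³` with zero means and pairwise moments
`E(AB) = ε₁`, `E(BC) = ε₂`, `E(AC) = ε₃`. -/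
theorem suppes_zanotti_sufficient
    (ε₁ ε₂ ε₃ : ℝ)
    (h₁ : ε₁ ∈ Set.Icc (-1 : ℝ) 1) (h₂ : ε₂ ∈ Set.Icc (-1 : ℝ) 1)
    (h₃ : ε₃ ∈ Set.Icc (-1 : ℝ) 1)
    (hlo : -1 ≤ ε₁ + ε₂ + ε₃)
    (hhi : ε₁ + ε₂ + ε₃ ≤ 1 + 2 * min ε₁ (min ε₂ ε₃)) :
    ∃ p : ℝ → ℝ → ℝ → ℝ,
      (∀ x ∈ pmOne, ∀ y ∈ pmOne, ∀ z ∈ pmOne, 0 ≤ p x y z) ∧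
      (∑ x ∈ pmOne, ∑ y ∈ pmOne, ∑ z ∈ pmOne, p x y z = 1) ∧
      Ep p (fun a _ _ => a) = 0 ∧ Ep p (fun _ b _ => b) = 0 ∧
      Ep p (fun _ _ c => c) = 0 ∧
      Ep p (fun a b _ => a * b) = ε₁ ∧
      Ep p (fun _ b c => b * c) = ε₂ ∧
      Ep p (fun a _ c => a * c) = ε₃ := by
  obtain ⟨ha1, ha2⟩ := h₁
  obtain ⟨hb1, hb2⟩ := h₂
  obtain ⟨hc1, hc2⟩ := h₃
  have hm1 : min ε₁ (min ε₂ ε₃) ≤ ε₁ := min_le_left _ _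
  have hm2 : min ε₁ (min ε₂ ε₃) ≤ ε₂ := le_trans (min_le_right _ _) (min_le_left _ _)
  have hm3 : min ε₁ (min ε₂ ε₃) ≤ ε₃ := le_trans (min_le_right _ _) (min_le_right _ _)
  refine ⟨fun x y z => (1 + ε₁ * (x * y) + ε₂ * (y * z) + ε₃ * (x * z)) / 8, ?_, ?_, ?_, ?_, ?_, ?_, ?_, ?_⟩
  · intro x hx y hy z hz
    simp only [pmOne, Finset.mem_insert, Finset.mem_singleton] at hx hy hz
    rcases hx with rfl | rfl <;> rcases hy with rfl | rfl <;> rcases hz with rfl | rfl <;>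
      ring_nf <;> nlinarith
  all_goals
    simp only [Ep, pmOne, Finset.sum_insert, Finset.mem_singleton, Finset.sum_singleton]
  all_goals norm_num <;> ring
end
end

section
/- Label by the integers 1 through 18 the eighteen vectors (0,0,0,1), (0,0,1,0), (1,1,0,0), (1,−1,0,0), (0,1,0,0), (1,0,1,0), (1,0,−1,0), (1,−1,1,−1), (1,−1,−1,1), (0,0,1,1), (1,1,1,1), (0,1,0,−1), (1,0,0,1), (1,0,0,−1), (1,1,−1,1), (1,1,1,−1), (−1,1,1,1), (0,1,−1,0), in this order. Then there is no function v : {1,…,18} → {−1,1} satisfying all nine equations: v(1)v(2)v(3)v(4) = −1; v(1)v(5)v(6)v(7) = −1; v(8)v(9)v(3)v(10) = −1; v(8)v(11)v(7)v(12) = −1; v(2)v(5)v(13)v(14) = −1; v(9)v(11)v(14)v(18) = −1; v(15)v(16)v(4)v(10) = −1; v(15)v(17)v(6)v(12) = −1; v(16)v(17)v(13)v(18) = −1. -/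
/-- The 18-vector Kochen–Specker system: labeling by `1, …, 18` (here `Fin 18`,
with label `k` corresponding to index `k - 1`) the eighteen vectors
(0,0,0,1), (0,0,1,0), (1,1,0,0), (1,−1,0,0), (0,1,0,0), (1,0,1,0), (1,0,−1,0),
(1,−1,1,−1), (1,−1,−1,1), (0,0,1,1), (1,1,1,1), (0,1,0,−1), (1,0,0,1),
(1,0,0,−1), (1,1,−1,1), (1,1,1,−1), (−1,1,1,1), (0,1,−1,0), there is no
±1-valued assignment `v` satisfying the nine context equations. -/
theorem kochen_specker_18_vectors :
    ¬ ∃ v : Fin 18 → ℤ,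
        (∀ k, v k = -1 ∨ v k = 1) ∧
        v 0 * v 1 * v 2 * v 3 = -1 ∧
        v 0 * v 4 * v 5 * v 6 = -1 ∧
        v 7 * v 8 * v 2 * v 9 = -1 ∧
        v 7 * v 10 * v 6 * v 11 = -1 ∧
        v 1 * v 4 * v 12 * v 13 = -1 ∧
        v 8 * v 10 * v 13 * v 17 = -1 ∧
        v 14 * v 15 * v 3 * v 9 = -1 ∧
        v 14 * v 16 * v 5 * v 11 = -1 ∧
        v 15 * v 16 * v 12 * v 17 = -1 := by
  rintro ⟨v, hpm, h1, h2, h3, h4, h5, h6, h7, h8, h9⟩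
  have sq : ∀ k, v k * v k = 1 := fun k => by
    rcases hpm k with e | e <;> rw [e] <;> norm_num
  have P : (v 0 * v 1 * v 2 * v 3) * (v 0 * v 4 * v 5 * v 6) *
      (v 7 * v 8 * v 2 * v 9) * (v 7 * v 10 * v 6 * v 11) *
      (v 1 * v 4 * v 12 * v 13) * (v 8 * v 10 * v 13 * v 17) *
      (v 14 * v 15 * v 3 * v 9) * (v 14 * v 16 * v 5 * v 11) *
      (v 15 * v 16 * v 12 * v 17) = -1 := by
    rw [h1, h2, h3, h4, h5, h6, h7, h8, h9]; norm_num
  have Q : (v 0 * v 1 * v 2 * v 3) * (v 0 * v 4 * v 5 * v 6) *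
      (v 7 * v 8 * v 2 * v 9) * (v 7 * v 10 * v 6 * v 11) *
      (v 1 * v 4 * v 12 * v 13) * (v 8 * v 10 * v 13 * v 17) *
      (v 14 * v 15 * v 3 * v 9) * (v 14 * v 16 * v 5 * v 11) *
      (v 15 * v 16 * v 12 * v 17) = 1 := by
    calc _ = (v 0 * v 0) * ((v 1 * v 1) * ((v 2 * v 2) * ((v 3 * v 3) *
        ((v 4 * v 4) * ((v 5 * v 5) * ((v 6 * v 6) * ((v 7 * v 7) *
        ((v 8 * v 8) * ((v 9 * v 9) * ((v 10 * v 10) * ((v 11 * v 11) *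
        ((v 12 * v 12) * ((v 13 * v 13) * ((v 14 * v 14) * ((v 15 * v 15) *
        ((v 16 * v 16) * (v 17 * v 17))))))))))))))))) := by ring
      _ = 1 := by simp only [sq]; norm_num
  rw [P] at Q
  norm_num at Q
end

section
/- Among all signed probability distributions p on {−1,1}³ whose coordinate random variables A, B, C satisfy E(A) = E(B) = E(C) = 0, E(AB) = −1, E(AC) = −1/2, E(BC) = 0, the minimum of the L1 norm ∑_ω |p(ω)| equals 5/4; moreover, such a signed distribution attains this minimum L1 norm if and only if its triple moment E(ABC) lies in the interval [−1/2, 1/2]. -/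
open Finset

noncomputable section

/-- The feasibility constraints of the example: a signed distribution on
`{−1,1}³` with zero means, `E(AB) = −1`, `E(AC) = −1/2`, `E(BC) = 0`. -/
def Feasible (p : ℝ → ℝ → ℝ → ℝ) : Prop :=
  (∑ x ∈ pmOne, ∑ y ∈ pmOne, ∑ z ∈ pmOne, p x y z = 1) ∧
  Ep p (fun a _ _ => a) = 0 ∧ Ep p (fun _ b _ => b) = 0 ∧
  Ep p (fun _ _ c => c) = 0 ∧
  Ep p (fun a b _ => a * b) = -1 ∧
  Ep p (fun a _ c => a * c) = -(1/2) ∧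
  Ep p (fun _ b c => b * c) = 0

/-- L1 norm of a signed distribution on `{−1,1}³`. -/
def L1 (p : ℝ → ℝ → ℝ → ℝ) : ℝ :=
  ∑ x ∈ pmOne, ∑ y ∈ pmOne, ∑ z ∈ pmOne, |p x y z|

lemma L1_formula (p : ℝ → ℝ → ℝ → ℝ) (hp : Feasible p) :
    L1 p = |(Ep p (fun a b c => a * b * c) - 1/2)/8| + |(1/2 - Ep p (fun a b c => a * b * c))/8|
      + |(3/2 - Ep p (fun a b c => a * b * c))/8| + |(5/2 + Ep p (fun a b c => a * b * c))/8|
      + |(5/2 - Ep p (fun a b c => a * b * c))/8| + |(3/2 + Ep p (fun a b c => a * b * c))/8|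
      + |(1/2 + Ep p (fun a b c => a * b * c))/8| + |(1/2 + Ep p (fun a b c => a * b * c))/8| := by
  obtain ⟨h1,h2,h3,h4,h5,h6,h7⟩ := hp
  set t := Ep p (fun a b c => a * b * c) with ht0
  have ht : Ep p (fun a b c => a * b * c) = t := rfl
  simp only [Ep, pmOne, Finset.sum_pair (show (-1:ℝ) ≠ 1 by norm_num)] at h1 h2 h3 h4 h5 h6 h7 ht
  have e1 : p 1 1 1 = (t - 1/2)/8 := by linarith
  have e2 : p 1 1 (-1) = (1/2 - t)/8 := by linarith
  have e3 : p 1 (-1) 1 = (3/2 - t)/8 := by linarith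
  have e4 : p 1 (-1) (-1) = (5/2 + t)/8 := by linarith
  have e5 : p (-1) 1 1 = (5/2 - t)/8 := by linarith
  have e6 : p (-1) 1 (-1) = (3/2 + t)/8 := by linarith
  have e7 : p (-1) (-1) 1 = (1/2 + t)/8 := by linarith
  have e8 : p (-1) (-1) (-1) = (-(1/2) - t)/8 := by linarith
  simp only [L1, pmOne, Finset.sum_pair (show (-1:ℝ) ≠ 1 by norm_num), e1,e2,e3,e4,e5,e6,e7,e8]
  rw [show (-(1/2) - t)/8 = -((1/2 + t)/8) by ring, abs_neg]
  ring


/-- Among signed distributions on `{−1,1}³` with zero means, `E(AB) = −1`,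
`E(AC) = −1/2`, `E(BC) = 0`, the minimum L1 norm equals `5/4`, and a feasible
signed distribution attains it iff its triple moment `E(ABC)` lies in
`[−1/2, 1/2]`. -/
theorem min_l1_norm_eq_five_fourths :
    IsLeast {m : ℝ | ∃ p : ℝ → ℝ → ℝ → ℝ, Feasible p ∧ L1 p = m} (5/4) ∧
    ∀ p : ℝ → ℝ → ℝ → ℝ, Feasible p →
      (L1 p = 5/4 ↔ Ep p (fun a b c => a * b * c) ∈ Set.Icc (-(1/2) : ℝ) (1/2)) := by
  have key : ∀ p : ℝ → ℝ → ℝ → ℝ, Feasible p →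
      (5/4 ≤ L1 p ∧ (L1 p = 5/4 ↔ Ep p (fun a b c => a * b * c) ∈ Set.Icc (-(1/2) : ℝ) (1/2))) := by
    intro p hp
    rw [L1_formula p hp]
    set t := Ep p (fun a b c => a * b * c)
    have f1 := le_abs_self ((t - 1/2)/8); have g1 := neg_le_abs ((t - 1/2)/8)
    have f2 := le_abs_self ((1/2 - t)/8); have g2 := neg_le_abs ((1/2 - t)/8)
    have f3 := le_abs_self ((3/2 - t)/8); have g3 := neg_le_abs ((3/2 - t)/8)
    have f4 := le_abs_self ((5/2 + t)/8); have g4 := neg_le_abs ((5/2 + t)/8)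
    have f5 := le_abs_self ((5/2 - t)/8); have g5 := neg_le_abs ((5/2 - t)/8)
    have f6 := le_abs_self ((3/2 + t)/8); have g6 := neg_le_abs ((3/2 + t)/8)
    have f7 := le_abs_self ((1/2 + t)/8); have g7 := neg_le_abs ((1/2 + t)/8)
    simp only [Set.mem_Icc]
    refine ⟨by linarith, ⟨fun heq => ⟨by linarith, by linarith⟩, ?_⟩⟩
    rintro ⟨hl, hr⟩
    rw [abs_of_nonpos (by linarith), abs_of_nonneg (by linarith),
      abs_of_nonneg (by linarith : (0:ℝ) ≤ (3/2 - t)/8),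
      abs_of_nonneg (by linarith : (0:ℝ) ≤ (5/2 + t)/8),
      abs_of_nonneg (by linarith : (0:ℝ) ≤ (5/2 - t)/8),
      abs_of_nonneg (by linarith : (0:ℝ) ≤ (3/2 + t)/8),
      abs_of_nonneg (by linarith : (0:ℝ) ≤ (1/2 + t)/8)]
    ring
  constructor
  · constructor
    · have hf : Feasible (fun x y z => (1 - x*y - x*z/2)/8) := by
        refine ⟨?_, ?_, ?_, ?_, ?_, ?_, ?_⟩ <;>
          simp only [Ep, pmOne, Finset.sum_pair (show (-1:ℝ) ≠ 1 by norm_num)] <;> norm_num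
      have ht : Ep (fun x y z => (1 - x*y - x*z/2)/8) (fun a b c => a * b * c) = 0 := by
        simp only [Ep, pmOne, Finset.sum_pair (show (-1:ℝ) ≠ 1 by norm_num)]; norm_num
      refine ⟨fun x y z => (1 - x*y - x*z/2)/8, hf, ?_⟩
      rw [L1_formula _ hf, ht]
      rw [show ((0:ℝ) - 1/2)/8 = -(1/16) by norm_num, abs_neg,
        abs_of_nonneg (by norm_num : (0:ℝ) ≤ 1/16),
        abs_of_nonneg (by norm_num : (0:ℝ) ≤ (1/2 - 0)/8),
        abs_of_nonneg (by norm_num : (0:ℝ) ≤ (3/2 - 0)/8),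
        abs_of_nonneg (by norm_num : (0:ℝ) ≤ (5/2 + 0)/8),
        abs_of_nonneg (by norm_num : (0:ℝ) ≤ (5/2 - 0)/8),
        abs_of_nonneg (by norm_num : (0:ℝ) ≤ (3/2 + 0)/8),
        abs_of_nonneg (by norm_num : (0:ℝ) ≤ (1/2 + 0)/8)]
      norm_num
    · rintro m ⟨p, hp, rfl⟩
      exact (key p hp).1
  · intro p hp
    exact (key p hp).2
end
end
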